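/- Let ℓ be a prime and m, n ∈ ℕ ∪ {∞} with n ≤ m. Let K be a field with μ_{ℓ^m} ⊂ K and v a valuation of K. Then the map σ ↦ σ_n restricts to surjections D_v^m → D_v^n and I_v^m → I_v^n; i.e., every element of D_v^n (resp. I_v^n) admits an m-lift lying in D_v^m (resp. I_v^m). -/

import Mathlib

open Polynomial

noncomputable section

/-- The coefficient ring `Λ_m`: `ℤ/ℓ^m` for finite `m`, and `ℤ_ℓ` for `m = ∞`. -/
def Lam (ℓ : ℕ) [Fact ℓ.Prime] : ℕ∞ → Type
  | ⊤ => PadicInt ℓ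
  | (m : ℕ) => ZMod (ℓ ^ m)

instance (ℓ : ℕ) [Fact ℓ.Prime] : (m : ℕ∞) → CommRing (Lam ℓ m)
  | ⊤ => inferInstanceAs (CommRing (PadicInt ℓ))
  | (m : ℕ) => inferInstanceAs (CommRing (ZMod (ℓ ^ m)))

/-- The canonical projection `Λ_m → Λ_n` (for `n ≤ m`; junk value `0` otherwise). -/
def LamProj (ℓ : ℕ) [Fact ℓ.Prime] : (m n : ℕ∞) → Lam ℓ m →+ Lam ℓ n
  | ⊤, ⊤ => AddMonoidHom.id _
  | ⊤, (n : ℕ) => (PadicInt.toZModPow n).toAddMonoidHom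
  | (m : ℕ), (n : ℕ) =>
      if h : ℓ ^ n ∣ ℓ ^ m then (ZMod.castHom h (ZMod (ℓ ^ n))).toAddMonoidHom else 0
  | (_ : ℕ), ⊤ => 0

/-- The `ℓ^m`-minimized Galois group `𝔤^m(K) = Hom(Kˣ, Λ_m)`. -/
abbrev gal (ℓ : ℕ) [Fact ℓ.Prime] (m : ℕ∞) (K : Type*) [Field K] : Type _ :=
  Additive Kˣ →+ Lam ℓ m

variable {ℓ : ℕ} [Fact ℓ.Prime] {K : Type*} [Field K]

open scoped Classical

/-- Evaluation of `σ ∈ 𝔤^m(K)` at a unit of `K`. -/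
def galu {m : ℕ∞} (σ : gal ℓ m K) (x : Kˣ) : Lam ℓ m :=
  σ (Additive.ofMul x)

/-- Evaluation of `σ ∈ 𝔤^m(K)` at an arbitrary element of `K` (junk value `0` at `0`). -/
def galApp {m : ℕ∞} (σ : gal ℓ m K) (x : K) : Lam ℓ m :=
  if hx : x ≠ 0 then galu σ (Units.mk0 x hx) else 0

/-- Scalar multiplication of `𝔤^m(K)` by `Λ_m`. -/
def galSmul {m : ℕ∞} (a : Lam ℓ m) (σ : gal ℓ m K) : gal ℓ m K :=
  AddMonoidHom.mk' (fun x => a * σ x) (by intro x y; simp only [map_add, mul_add])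

/-- The canonical map `𝔤^m(K) → 𝔤^n(K)`, `σ ↦ σ_n`. -/
def galProj (m n : ℕ∞) (σ : gal ℓ m K) : gal ℓ n K :=
  (LamProj ℓ m n).comp σ

/-- `(σ,τ)` is a C-pair: `σ(x)·τ(1−x) = σ(1−x)·τ(x)` for all `x ∈ K ∖ {0,1}`. -/
def IsCPair {m : ℕ∞} (σ τ : gal ℓ m K) : Prop :=
  ∀ x : K, x ≠ 0 → x ≠ 1 →
    galApp σ x * galApp τ (1 - x) = galApp σ (1 - x) * galApp τ x

/-- A subset of `𝔤^m(K)` is a C-set if all pairs of its elements are C-pairs. -/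
def IsCSet {m : ℕ∞} (S : Set (gal ℓ m K)) : Prop :=
  ∀ σ ∈ S, ∀ τ ∈ S, IsCPair σ τ

/-- `μ_{c·ℓ^m} ⊂ K`: the polynomial `X^{c·ℓ^m} − 1` splits completely in `K`
(for all finite exponents when `m = ∞`). -/
def MuIn (K : Type*) [Field K] (c ℓ : ℕ) : ℕ∞ → Prop
  | ⊤ => ∀ k : ℕ, Polynomial.Splits (Polynomial.X ^ (c * ℓ ^ k) - 1 : K[X])
  | (N : ℕ) => Polynomial.Splits (Polynomial.X ^ (c * ℓ ^ N) - 1 : K[X])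

/-- `M_r(n) = (r+1)·n − r`. -/
def Mfun (r : ℕ) : ℕ∞ → ℕ∞
  | ⊤ => ⊤
  | (n : ℕ) => (((r + 1) * n - r : ℕ) : ℕ∞)

/-- `N(n) = M_1((6·ℓ^{3n−2} − 7)·(n−1) + 3n − 2)`. -/
def Nfun (ℓ : ℕ) : ℕ∞ → ℕ∞
  | ⊤ => ⊤
  | (n : ℕ) => Mfun 1 (((6 * ℓ ^ (3 * n - 2) - 7) * (n - 1) + 3 * n - 2 : ℕ) : ℕ∞)

/-- `R(n) = N(M_2(M_1(n)))`. -/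
def Rfun (ℓ : ℕ) (n : ℕ∞) : ℕ∞ :=
  Nfun ℓ (Mfun 2 (Mfun 1 n))

/-- The minimized inertia group `I_v^m` of a valuation (valuation subring) of `K`:
homomorphisms vanishing on the `v`-units. -/
def inertia (ℓ : ℕ) [Fact ℓ.Prime] (m : ℕ∞) (A : ValuationSubring K) : Set (gal ℓ m K) :=
  {σ | ∀ x : Kˣ, A.valuation (x : K) = 1 → galu σ x = 0}

/-- The minimized decomposition group `D_v^m` of a valuation (valuation subring) of `K`:
homomorphisms vanishing on the principal `v`-units `1 + 𝔪_v`. -/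
def decomp (ℓ : ℕ) [Fact ℓ.Prime] (m : ℕ∞) (A : ValuationSubring K) : Set (gal ℓ m K) :=
  {σ | ∀ x : Kˣ, A.valuation ((x : K) - 1) < 1 → galu σ x = 0}

/-- A subgroup of (the units of) a linearly ordered group-with-zero is convex. -/
def IsConvexSub {Γ : Type*} [LinearOrderedCommGroupWithZero Γ] (C : Subgroup Γˣ) : Prop :=
  ∀ γ c : Γˣ, (1 : Γ) ≤ (γ : Γ) → (γ : Γ) ≤ (c : Γ) → c ∈ C → γ ∈ C

/-- A subgroup is `ℓ`-divisible. -/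
def IsLDivisible {Γ : Type*} [LinearOrderedCommGroupWithZero Γ] (ℓ : ℕ) (C : Subgroup Γˣ) :
    Prop :=
  ∀ c ∈ C, ∃ d ∈ C, d ^ ℓ = c

/-- Condition (V1): the value group `vK` contains no nontrivial `ℓ`-divisible convex
subgroups. -/
def NoLDivConvex (ℓ : ℕ) (A : ValuationSubring K) : Prop :=
  ∀ C : Subgroup (A.ValueGroup)ˣ, IsConvexSub C → IsLDivisible ℓ C → C = ⊥

/-- The residue field `Kv` of a valuation. -/
abbrev resField (A : ValuationSubring K) : Type _ := IsLocalRing.ResidueField A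

/-- `τ ∈ 𝔤^m(Kv)` is the element induced by `σ ∈ D_v^m` (i.e. `τ = σ_v`): for every
`v`-unit `x` one has `τ(x̄) = σ(x)`. -/
def Induces {m : ℕ∞} (A : ValuationSubring K) (σ : gal ℓ m K)
    (τ : gal ℓ m (resField A)) : Prop :=
  ∀ (x : Kˣ) (h : A.valuation (x : K) = 1),
    galApp τ (IsLocalRing.residue A ⟨(x : K), (A.valuation_le_one_iff (x : K)).mp h.le⟩) =
      galu σ x

/-- An `m`-visible valuation. -/
def IsVisibleVal (ℓ : ℕ) [Fact ℓ.Prime] (m : ℕ∞) (A : ValuationSubring K) : Prop :=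
  NoLDivConvex ℓ A ∧
  ¬ IsCSet (Set.univ : Set (gal ℓ m (resField A))) ∧
  ∀ B : ValuationSubring (resField A),
    decomp ℓ m B = Set.univ → inertia ℓ m B = {0}

/-- `Σ^⊥ = ∩_{σ ∈ Σ} ker σ ⊆ Kˣ`. -/
def orth {m : ℕ∞} (S : Set (gal ℓ m K)) : Set Kˣ :=
  {x | ∀ σ ∈ S, galu σ x = 0}

/-- `σ` is valuative: `σ ∈ I_v^m` for some valuation `v` of `K`. -/
def IsValuative {m : ℕ∞} (σ : gal ℓ m K) : Prop :=
  ∃ A : ValuationSubring K, σ ∈ inertia ℓ m A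

/-- `V = v_σ` is the coarsest valuation with `σ ∈ I_V^m`. -/
def IsVsigma {m : ℕ∞} (σ : gal ℓ m K) (V : ValuationSubring K) : Prop :=
  σ ∈ inertia ℓ m V ∧ ∀ W : ValuationSubring K, σ ∈ inertia ℓ m W → W ≤ V

/-- `V = v_Σ` is the coarsest valuation with `Σ ⊆ I_V^m`. -/
def IsVSet {m : ℕ∞} (S : Set (gal ℓ m K)) (V : ValuationSubring K) : Prop :=
  S ⊆ inertia ℓ m V ∧ ∀ W : ValuationSubring K, S ⊆ inertia ℓ m W → W ≤ V

/-- The set `D^m_n(Σ)`. -/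
def Dmn (n m : ℕ∞) (S : Set (gal ℓ n K)) : Set (gal ℓ n K) :=
  {τ | ∀ σ ∈ S, ∃ τ₁ τ₂ : gal ℓ n K, ∃ σ' τ' τ₁' τ₂' : gal ℓ m K,
    galProj m n σ' = σ ∧ galProj m n τ' = τ ∧ galProj m n τ₁' = τ₁ ∧ galProj m n τ₂' = τ₂ ∧
    ¬ IsCPair τ₁ τ₂ ∧ IsCPair σ' τ' ∧ IsCPair σ' τ₁' ∧ IsCPair σ' τ₂'}

/-- The set `I^m_n(Σ)`. -/
def Imn (n m : ℕ∞) (S : Set (gal ℓ n K)) : Set (gal ℓ n K) :=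
  {σ | σ ∈ S ∧ ∃ σ' : gal ℓ m K, galProj m n σ' = σ ∧
    ∀ τ ∈ S, ∃ τ' : gal ℓ m K, galProj m n τ' = τ ∧ IsCPair σ' τ'}

/-- `K` is a function field over `k`, i.e. a finitely generated field extension. -/
def IsFunctionField (k K : Type*) [Field k] [Field K] [Algebra k K] : Prop :=
  ∃ s : Finset K, IntermediateField.adjoin k (s : Set K) = ⊤

/-- `trdeg(K|k) = d`. -/
def HasTrdeg (k K : Type*) [Field k] [Field K] [Algebra k K] (d : ℕ) : Prop :=
  ∃ b : Fin d → K, IsTranscendenceBasis k b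


/-- The set `ℓ^n·𝔤^m(K)` (interpreted as the trivial subgroup when `n = ∞`). -/
def lPowSet (ℓ : ℕ) [Fact ℓ.Prime] (m : ℕ∞) (K : Type*) [Field K] : ℕ∞ → Set (gal ℓ m K)
  | ⊤ => {0}
  | (k : ℕ) => {x | ∃ σ : gal ℓ m K, x = galSmul ((ℓ : Lam ℓ m) ^ k) σ}

end

/-! Elements of `D_v^n` (resp. `I_v^n`) are the homomorphisms `Kˣ → Λ_n` vanishing on `H = U_v^1`
(resp. `H = U_v`), so such a `τ` has to be lifted along `Λ_m → Λ_n` to a homomorphism still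
vanishing on `H`. The evident necessary condition is that whenever `ℓ^k • x ∈ H`, the value `τ x`
is the image of an `ℓ^k`-torsion element of `Λ_m`. It is also sufficient: for finitely generated
groups by the structure theorem, and in general by compactness of `Λ_m` (Tychonoff).

For `H = U_v` the condition is empty, since `Kˣ ⧸ U_v ≅ vK` is torsion-free. For `H = U_v^1`,
if `x ^ ℓ^k` is a principal unit then, factoring `X ^ ℓ^k - 1` over `K`, `x` is congruent modulo
`U_v^1` to an `ℓ^k`-th root of unity, which is an `ℓ^(m-k)`-th power because `μ_{ℓ^m} ⊂ K`;
hence `τ x ∈ ℓ^(m-k) Λ_n`, the image of the `ℓ^k`-torsion of `Λ_m`. -/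

open Function
open scoped DirectSum

section Lifting

variable {G Λ B : Type*} [AddCommGroup G] [AddCommGroup Λ] [AddCommGroup B]

/-- Necessary for `τ` to lift along `π` to a homomorphism vanishing on `H`; sufficient when `π` is a
continuous surjection from a compact group onto `ZMod (ℓ ^ n)`
(`TorsionLiftable.exists_comp_eq_of_le_ker`). -/
def TorsionLiftable (ℓ : ℕ) (π : Λ →+ B) (H : AddSubgroup G) (τ : G →+ B) : Prop :=
  ∀ (k : ℕ) (x : G), ℓ ^ k • x ∈ H → ∃ a, ℓ ^ k • a = 0 ∧ π a = τ x

theorem exists_comp_eq_of_finsupp {ι : Type*} {π : Λ →+ B} (hπ : Surjective π)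
    (τ : (ι →₀ ℤ) →+ B) : ∃ σ, π.comp σ = τ := by
  choose a ha using fun i => hπ (τ (Finsupp.single i 1))
  exact ⟨Finsupp.liftAddHom fun i => zmultiplesHom Λ (a i),
    Finsupp.addHom_ext' fun i => AddMonoidHom.ext_int (by simp [ha])⟩

theorem exists_comp_eq_of_zmod {d : ℕ} (π : Λ →+ B) (τ : ZMod d →+ B) {a : Λ} (ha : d • a = 0)
    (hπa : π a = τ 1) : ∃ σ, π.comp σ = τ := by
  refine ⟨ZMod.lift d ⟨zmultiplesHom Λ a, by simpa using ha⟩, AddMonoidHom.ext fun x => ?_⟩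
  obtain ⟨b, rfl⟩ := ZMod.intCast_surjective x
  simp only [AddMonoidHom.comp_apply, ZMod.lift_coe, zmultiplesHom_apply]
  rw [map_zsmul, hπa, ← map_zsmul, zsmul_one]

theorem exists_comp_eq_of_directSum {ι : Type*} [DecidableEq ι] {β : ι → Type*}
    [∀ i, AddCommGroup (β i)] (π : Λ →+ B) (τ : (⨁ i, β i) →+ B)
    (h : ∀ i, ∃ σ : β i →+ Λ, π.comp σ = τ.comp (DirectSum.of β i)) : ∃ σ, π.comp σ = τ := by
  choose σ hσ using h
  exact ⟨DirectSum.toAddMonoid σ, DirectSum.addHom_ext' fun i => by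
    rw [← hσ]; ext; simp⟩

theorem exists_comp_eq_of_prod {M N : Type*} [AddCommGroup M] [AddCommGroup N] (π : Λ →+ B)
    (τ : M × N →+ B) (hM : ∃ σ, π.comp σ = τ.comp (.inl M N))
    (hN : ∃ σ, π.comp σ = τ.comp (.inr M N)) : ∃ σ, π.comp σ = τ := by
  obtain ⟨σM, hσM⟩ := hM
  obtain ⟨σN, hσN⟩ := hN
  exact ⟨σM.coprod σN, by rw [AddMonoidHom.comp_coprod, hσM, hσN, AddMonoidHom.coprod_unique]⟩

theorem ZMod.eq_zero_of_nsmul_eq_zero_of_coprime {N d : ℕ} (hd : d.Coprime N) {c : ZMod N}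
    (hc : d • c = 0) : c = 0 := by
  rw [nsmul_eq_mul] at hc
  exact ((ZMod.unitOfCoprime d hd).isUnit.mul_right_eq_zero).mp hc

theorem TorsionLiftable.exists_comp_eq_of_fg [AddGroup.FG G] {ℓ n : ℕ} (hℓ : ℓ.Prime)
    {π : Λ →+ ZMod (ℓ ^ n)} (hπ : Surjective π) {τ : G →+ ZMod (ℓ ^ n)}
    (hτ : TorsionLiftable ℓ π ⊥ τ) : ∃ σ, π.comp σ = τ := by
  classical
  obtain ⟨N, ι, _, p, hp, e, ⟨φ⟩⟩ := AddCommGroup.equiv_free_prod_directSum_zmod G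
  suffices ∃ σ, π.comp σ = τ.comp φ.symm.toAddMonoidHom by
    obtain ⟨σ, hσ⟩ := this
    exact ⟨σ.comp φ.toAddMonoidHom, by ext; simp [← AddMonoidHom.comp_apply, hσ]⟩
  refine exists_comp_eq_of_prod π _ (exists_comp_eq_of_finsupp hπ _)
    (exists_comp_eq_of_directSum π _ fun i => ?_)
  set y := φ.symm (0, DirectSum.of _ i 1)
  have hy : p i ^ e i • y = 0 := by
    rw [← map_nsmul, Prod.smul_mk, smul_zero, ← map_nsmul, nsmul_eq_mul, mul_one,
      ZMod.natCast_self, map_zero, Prod.mk_zero_zero, map_zero]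
  by_cases hpi : p i = ℓ
  · obtain ⟨a, ha, hπa⟩ := hτ (e i) y (by rw [← hpi, hy]; exact zero_mem _)
    exact exists_comp_eq_of_zmod π _ (hpi ▸ ha) hπa
  · have hco : (p i ^ e i).Coprime (ℓ ^ n) :=
      ((Nat.coprime_primes (hp i) hℓ).mpr hpi).pow _ _
    refine exists_comp_eq_of_zmod π _ (smul_zero _) ?_
    have hτy : p i ^ e i • τ y = 0 := by rw [← map_nsmul, hy, map_zero]
    exact (map_zero π).trans (ZMod.eq_zero_of_nsmul_eq_zero_of_coprime hco hτy).symm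

theorem TorsionLiftable.exists_comp_eq [TopologicalSpace Λ] [CompactSpace Λ] [T2Space Λ]
    [ContinuousAdd Λ] {ℓ n : ℕ} (hℓ : ℓ.Prime) {π : Λ →+ ZMod (ℓ ^ n)} (hπ : Surjective π)
    (hπc : Continuous π) {τ : G →+ ZMod (ℓ ^ n)} (hτ : TorsionLiftable ℓ π ⊥ τ) :
    ∃ σ, π.comp σ = τ := by
  classical
  let C : Finset G → Set (G → Λ) := fun s =>
    ⋂ x ∈ s, ⋂ y ∈ s, {f | f (x + y) = f x + f y ∧ π (f x) = τ x}
  have hC_closed (s : Finset G) : IsClosed (C s) :=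
    isClosed_biInter fun x _ => isClosed_biInter fun y _ => by
      rw [Set.ofPred_and]
      exact (isClosed_eq (continuous_apply (x + y))
        ((continuous_apply x).add (continuous_apply y))).inter
          ((isClosed_discrete {τ x}).preimage (by fun_prop : Continuous fun f : G → Λ => π (f x)))
  have hC_anti {s t : Finset G} (hst : s ⊆ t) : C t ⊆ C s :=
    Set.biInter_subset_biInter_left hst |>.trans <|
      Set.iInter₂_mono fun x _ => Set.biInter_subset_biInter_left hst
  have hC_nonempty (s : Finset G) : (C s).Nonempty := by
    let H := AddSubgroup.closure (s : Set G)
    have : AddGroup.FG H := AddGroup.closure_finset_fg s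
    obtain ⟨σ, hσ⟩ := TorsionLiftable.exists_comp_eq_of_fg hℓ hπ (τ := τ.comp H.subtype)
      fun k x hx => hτ k x (by simpa using congrArg Subtype.val hx)
    have hext (z : H) : extend Subtype.val σ (0 : G → Λ) z = σ z :=
      Subtype.val_injective.extend_apply _ _ z
    refine ⟨extend Subtype.val σ (0 : G → Λ),
      Set.mem_iInter₂.mpr fun x hx => Set.mem_iInter₂.mpr fun y hy => ?_⟩
    have hx : x ∈ H := AddSubgroup.subset_closure hx
    have hy : y ∈ H := AddSubgroup.subset_closure hy
    exact ⟨by rw [hext ⟨x, hx⟩, hext ⟨y, hy⟩, ← map_add]; exact hext (⟨x, hx⟩ + ⟨y, hy⟩),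
      by rw [hext ⟨x, hx⟩]; exact DFunLike.congr_fun hσ ⟨x, hx⟩⟩
  obtain ⟨f, hf⟩ := IsCompact.nonempty_iInter_of_directed_nonempty_isCompact_isClosed C
    (fun s t => ⟨s ∪ t, hC_anti Finset.subset_union_left, hC_anti Finset.subset_union_right⟩)
    hC_nonempty (fun s => (hC_closed s).isCompact) hC_closed
  have hf (x y : G) : f (x + y) = f x + f y ∧ π (f x) = τ x := by
    have := Set.mem_iInter.mp hf {x, y}
    simp only [C, Set.mem_iInter] at this
    exact this x (by simp) y (by simp)
  exact ⟨AddMonoidHom.mk' f fun x y => (hf x y).1, AddMonoidHom.ext fun x => (hf x x).2⟩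

theorem TorsionLiftable.exists_comp_eq_of_le_ker [TopologicalSpace Λ] [CompactSpace Λ]
    [T2Space Λ] [ContinuousAdd Λ] {ℓ n : ℕ} (hℓ : ℓ.Prime) {π : Λ →+ ZMod (ℓ ^ n)}
    (hπ : Surjective π) (hπc : Continuous π) {H : AddSubgroup G} {τ : G →+ ZMod (ℓ ^ n)}
    (hτH : H ≤ τ.ker) (hτ : TorsionLiftable ℓ π H τ) :
    ∃ σ : G →+ Λ, H ≤ σ.ker ∧ π.comp σ = τ := by
  obtain ⟨σ, hσ⟩ := TorsionLiftable.exists_comp_eq hℓ hπ hπc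
    (τ := QuotientAddGroup.lift H τ hτH) fun k q hq => by
      obtain ⟨x, rfl⟩ := QuotientAddGroup.mk_surjective q
      rw [AddSubgroup.mem_bot, ← QuotientAddGroup.mk_nsmul, QuotientAddGroup.eq_zero_iff] at hq
      exact hτ k x hq
  refine ⟨σ.comp (QuotientAddGroup.mk' H), fun x hx => ?_, AddMonoidHom.ext fun x => ?_⟩
  · simp [(QuotientAddGroup.eq_zero_iff x).mpr hx]
  · exact DFunLike.congr_fun hσ (x : G ⧸ H)

theorem TorsionLiftable.of_nsmul_mem {ℓ : ℕ} (π : Λ →+ B) {H : AddSubgroup G} {τ : G →+ B}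
    (hτH : H ≤ τ.ker) (hH : ∀ (k : ℕ) (x : G), ℓ ^ k • x ∈ H → x ∈ H) : TorsionLiftable ℓ π H τ :=
  fun k x hx => ⟨0, smul_zero _, by rw [map_zero, hτH (hH k x hx)]⟩

end Lifting

theorem PadicInt.continuous_toZModPow (p : ℕ) [Fact p.Prime] (n : ℕ) :
    Continuous (PadicInt.toZModPow (p := p) n) := by
  refine continuous_discrete_rng.mpr fun c => ?_
  obtain ⟨a, rfl⟩ := ZMod.ringHom_surjective (PadicInt.toZModPow n) c
  convert IsUltrametricDist.isOpen_closedBall a (r := (p : ℝ) ^ (-(n : ℤ)))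
    (zpow_pos (mod_cast (Fact.out : p.Prime).pos) _).ne'
  ext x
  rw [Set.mem_preimage, Set.mem_singleton_iff, Metric.mem_closedBall, dist_eq_norm,
    PadicInt.norm_le_pow_iff_mem_span_pow, ← PadicInt.ker_toZModPow, RingHom.mem_ker, map_sub,
    sub_eq_zero]

theorem Polynomial.Splits.exists_pow_eq {K : Type*} [Field K] {a b : ℕ} (ha : a ≠ 0) (hb : b ≠ 0)
    (h : Splits (X ^ (a * b) - 1 : K[X])) {ζ : K} (hζ : ζ ^ a = 1) : ∃ ξ : K, ξ ^ b = ζ := by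
  have hdvd : X ^ b - C ζ ∣ X ^ (a * b) - 1 := by
    simpa [← pow_mul, ← C_pow, hζ, mul_comm] using sub_dvd_pow_sub_pow (X ^ b) (C ζ) a
  have hne : (X ^ (a * b) - 1 : K[X]) ≠ 0 := by
    simpa using X_pow_sub_C_ne_zero (by positivity) (1 : K)
  obtain ⟨ξ, hξ⟩ := (h.of_dvd hne hdvd).exists_eval_eq_zero (by
    rw [degree_X_pow_sub_C (Nat.pos_of_ne_zero hb)]; exact_mod_cast hb)
  exact ⟨ξ, by simpa [sub_eq_zero] using hξ⟩

namespace Valuation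

variable {K Γ₀ : Type*} [Field K] [LinearOrderedCommGroupWithZero Γ₀] (v : Valuation K Γ₀)

theorem map_eq_one_of_pow_eq_one {a : ℕ} (ha : a ≠ 0) {ζ : K} (hζ : ζ ^ a = 1) :
    v ζ = 1 :=
  (pow_eq_one_iff_left ha).mp (by rw [← map_pow, hζ, map_one])

theorem exists_pow_eq_one_lt_sub {a : ℕ} (ha : a ≠ 0) (h : Splits (X ^ a - 1 : K[X]))
    {x : K} (hx : v (x ^ a - 1) < 1) : ∃ ζ : K, ζ ^ a = 1 ∧ v (x - ζ) < 1 := by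
  have hmonic : (X ^ a - 1 : K[X]).Monic := by simpa using monic_X_pow_sub_C (1 : K) ha
  by_contra! hfar
  refine hx.not_ge ?_
  have hprod := h.eval_eq_prod_roots_of_monic hmonic x
  rw [eval_sub, eval_pow, eval_X, eval_one] at hprod
  rw [hprod, map_multiset_prod]
  refine Multiset.one_le_prod_of_one_le fun g hg => ?_
  rw [Multiset.map_map, Multiset.mem_map] at hg
  obtain ⟨ρ, hρ, rfl⟩ := hg
  exact hfar ρ (by simpa [sub_eq_zero] using (mem_roots hmonic.ne_zero).mp hρ)

end Valuation

namespace ValuationSubring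

variable {K : Type*} [Field K] (A : ValuationSubring K)

theorem exists_div_pow_mem_principalUnitGroup {a b : ℕ} (ha : a ≠ 0) (hb : b ≠ 0)
    (h : Splits (X ^ (a * b) - 1 : K[X])) {x : Kˣ} (hx : x ^ a ∈ A.principalUnitGroup) :
    ∃ ξ : Kˣ, x / ξ ^ b ∈ A.principalUnitGroup := by
  have hsplit : Splits (X ^ a - 1 : K[X]) :=
    h.of_dvd (by simpa using X_pow_sub_C_ne_zero (by positivity) (1 : K))
      (by simpa [pow_mul] using sub_dvd_pow_sub_pow (X ^ a : K[X]) 1 b)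
  obtain ⟨ζ, hζ, hxζ⟩ := A.valuation.exists_pow_eq_one_lt_sub ha hsplit (x := x)
    (by simpa [mem_principalUnitGroup_iff] using hx)
  obtain ⟨ξ, rfl⟩ := h.exists_pow_eq ha hb hζ
  have hξ : ξ ≠ 0 := by rintro rfl; simp [zero_pow hb, zero_pow ha] at hζ
  refine ⟨Units.mk0 ξ hξ, ?_⟩
  have hdiff : ((x / Units.mk0 ξ hξ ^ b : Kˣ) : K) - 1 = ((x : K) - ξ ^ b) * (ξ ^ b)⁻¹ := by
    rw [Units.val_div_eq_div_val, Units.val_pow_eq_pow_val, Units.val_mk0]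
    field_simp
  rw [mem_principalUnitGroup_iff, hdiff, map_mul, map_inv₀,
    A.valuation.map_eq_one_of_pow_eq_one ha hζ, inv_one, mul_one]
  exact hxζ

theorem mem_unitGroup_of_pow_mem {a : ℕ} (ha : a ≠ 0) {x : Kˣ} (hx : x ^ a ∈ A.unitGroup) :
    x ∈ A.unitGroup := by
  rw [mem_unitGroup_iff, Units.val_pow_eq_pow_val, map_pow] at hx
  exact (pow_eq_one_iff_left ha).mp hx

end ValuationSubring

section MinimizedGaloisGroup

variable {ℓ : ℕ} [Fact ℓ.Prime] {K : Type*} [Field K]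

theorem lamProj_coe_coe {m n : ℕ} (h : n ≤ m) :
    LamProj ℓ m n = (ZMod.castHom (pow_dvd_pow ℓ h) (ZMod (ℓ ^ n))).toAddMonoidHom :=
  dif_pos _

theorem Lam.pow_nsmul_eq_zero {m j : ℕ} (h : m ≤ j) (a : Lam ℓ m) : ℓ ^ j • a = 0 := by
  rw [nsmul_eq_mul]
  convert zero_mul a
  exact (ZMod.natCast_eq_zero_iff _ _).mpr (pow_dvd_pow ℓ h)

theorem lamProj_surjective {m : ℕ∞} {n : ℕ} (hnm : (n : ℕ∞) ≤ m) :
    Function.Surjective (LamProj ℓ m n) := by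
  cases m with
  | top => exact ZMod.ringHom_surjective (PadicInt.toZModPow n)
  | coe m =>
    rw [lamProj_coe_coe (by exact_mod_cast hnm)]
    exact ZMod.ringHom_surjective _

theorem exists_lamProj_comp_eq {G : Type*} [AddCommGroup G] {m : ℕ∞} {n : ℕ}
    (hnm : (n : ℕ∞) ≤ m) {H : AddSubgroup G} {τ : G →+ Lam ℓ n} (hτH : H ≤ τ.ker)
    (hτ : TorsionLiftable ℓ (LamProj ℓ m n) H τ) :
    ∃ σ : G →+ Lam ℓ m, H ≤ σ.ker ∧ (LamProj ℓ m n).comp σ = τ := by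
  have hℓ : ℓ.Prime := Fact.out
  cases m with
  | top =>
    exact TorsionLiftable.exists_comp_eq_of_le_ker (Λ := PadicInt ℓ) hℓ
      (ZMod.ringHom_surjective _) (PadicInt.continuous_toZModPow ℓ n) hτH hτ
  | coe m =>
    have : NeZero (ℓ ^ m) := ⟨pow_ne_zero _ hℓ.ne_zero⟩
    rw [lamProj_coe_coe (by exact_mod_cast hnm)] at hτ ⊢
    exact TorsionLiftable.exists_comp_eq_of_le_ker (Λ := ZMod (ℓ ^ m)) hℓ
      (ZMod.ringHom_surjective _) continuous_of_discreteTopology hτH hτ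

theorem MuIn.splits {m : ℕ∞} (hμ : MuIn K 1 ℓ m) {M : ℕ} (hM : (M : ℕ∞) ≤ m) :
    Splits (X ^ ℓ ^ M - 1 : K[X]) := by
  cases m with
  | top => simpa using hμ M
  | coe m =>
    have hℓ : ℓ.Prime := Fact.out
    obtain ⟨c, hc⟩ := pow_dvd_pow ℓ (by exact_mod_cast hM : M ≤ m)
    have hμ : Splits (X ^ (1 * ℓ ^ m) - 1 : K[X]) := hμ
    rw [one_mul] at hμ
    refine hμ.of_dvd (by simpa using X_pow_sub_C_ne_zero (pow_pos hℓ.pos m) (1 : K)) ?_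
    simpa [hc, pow_mul] using sub_dvd_pow_sub_pow (X ^ ℓ ^ M : K[X]) 1 c

theorem mem_inertia_iff {m : ℕ∞} {A : ValuationSubring K} {σ : gal ℓ m K} :
    σ ∈ inertia ℓ m A ↔ A.unitGroup.toAddSubgroup ≤ σ.ker :=
  Iff.rfl

theorem mem_decomp_iff {m : ℕ∞} {A : ValuationSubring K} {σ : gal ℓ m K} :
    σ ∈ decomp ℓ m A ↔ A.principalUnitGroup.toAddSubgroup ≤ σ.ker :=
  Iff.rfl

theorem torsionLiftable_decomp {m : ℕ∞} {n : ℕ} (hnm : (n : ℕ∞) ≤ m) (hμ : MuIn K 1 ℓ m)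
    {A : ValuationSubring K} {τ : gal ℓ n K} (hτ : τ ∈ decomp ℓ n A) :
    TorsionLiftable ℓ (LamProj ℓ m n) A.principalUnitGroup.toAddSubgroup τ := by
  have hℓ : ℓ.Prime := Fact.out
  intro k x hx
  have hdiv (M : ℕ) (hkM : k ≤ M) (hM : (M : ℕ∞) ≤ m) :
      ∃ ξ : Kˣ, τ x = ℓ ^ (M - k) • τ (.ofMul ξ) := by
    have hsplit : Splits (X ^ (ℓ ^ k * ℓ ^ (M - k)) - 1 : K[X]) := by
      rw [← pow_add, Nat.add_sub_cancel' hkM]; exact hμ.splits hM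
    obtain ⟨ξ, hξ⟩ := A.exists_div_pow_mem_principalUnitGroup (pow_ne_zero k hℓ.ne_zero)
      (pow_ne_zero (M - k) hℓ.ne_zero) hsplit hx
    refine ⟨ξ, ?_⟩
    have h0 : τ (x - ℓ ^ (M - k) • .ofMul ξ) = 0 := mem_decomp_iff.mp hτ hξ
    rwa [map_sub, map_nsmul, sub_eq_zero] at h0
  cases m with
  | top =>
    obtain ⟨ξ, hξ⟩ := hdiv (k + n) (Nat.le_add_right k n) le_top
    refine ⟨0, smul_zero _, ?_⟩
    rw [map_zero, hξ, Nat.add_sub_cancel_left]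
    exact (Lam.pow_nsmul_eq_zero le_rfl _).symm
  | coe m =>
    obtain ⟨j, c, hj, hc⟩ : ∃ (j : ℕ) (c : Lam ℓ n), m ≤ k + j ∧ τ x = ℓ ^ j • c := by
      by_cases hkm : k ≤ m
      · obtain ⟨ξ, hξ⟩ := hdiv m hkm le_rfl
        exact ⟨m - k, _, by omega, hξ⟩
      · exact ⟨0, τ x, by omega, by simp⟩
    obtain ⟨a, rfl⟩ := lamProj_surjective hnm c
    refine ⟨ℓ ^ j • a, ?_, by rw [hc, map_nsmul]⟩
    rw [smul_smul, ← pow_add]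
    exact Lam.pow_nsmul_eq_zero hj a

theorem torsionLiftable_inertia {m : ℕ∞} {n : ℕ} {A : ValuationSubring K} {τ : gal ℓ n K}
    (hτ : τ ∈ inertia ℓ n A) :
    TorsionLiftable ℓ (LamProj ℓ m n) A.unitGroup.toAddSubgroup τ :=
  TorsionLiftable.of_nsmul_mem _ (mem_inertia_iff.mp hτ) fun k _ hx =>
    A.mem_unitGroup_of_pow_mem (pow_ne_zero k (Fact.out : ℓ.Prime).ne_zero) hx

theorem galProj_top_top (σ : gal ℓ ⊤ K) : galProj ⊤ ⊤ σ = σ :=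
  AddMonoidHom.id_comp σ

end MinimizedGaloisGroup

theorem stmt10_general (ℓ : ℕ) [Fact ℓ.Prime] (m n : ℕ∞) (hnm : n ≤ m)
    (K : Type*) [Field K] (hμ : MuIn K 1 ℓ m) (A : ValuationSubring K) :
    (∀ σ ∈ decomp ℓ m A, galProj m n σ ∈ decomp ℓ n A) ∧
    (∀ σ ∈ inertia ℓ m A, galProj m n σ ∈ inertia ℓ n A) ∧
    (∀ τ ∈ decomp ℓ n A, ∃ σ ∈ decomp ℓ m A, galProj m n σ = τ) ∧
    (∀ τ ∈ inertia ℓ n A, ∃ σ ∈ inertia ℓ m A, galProj m n σ = τ) := by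
  refine ⟨fun σ hσ x hx => ?_, fun σ hσ x hx => ?_, fun τ hτ => ?_, fun τ hτ => ?_⟩
  · exact (congrArg (LamProj ℓ m n) (hσ x hx)).trans (map_zero _)
  · exact (congrArg (LamProj ℓ m n) (hσ x hx)).trans (map_zero _)
  · cases n with
    | top => obtain rfl := top_le_iff.mp hnm; exact ⟨τ, hτ, galProj_top_top τ⟩
    | coe n =>
      exact exists_lamProj_comp_eq hnm (mem_decomp_iff.mp hτ) (torsionLiftable_decomp hnm hμ hτ)
  · cases n with
    | top => obtain rfl := top_le_iff.mp hnm; exact ⟨τ, hτ, galProj_top_top τ⟩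
    | coe n => exact exists_lamProj_comp_eq hnm (mem_inertia_iff.mp hτ) (torsionLiftable_inertia hτ)

/-- The canonical maps `D_v^m → D_v^n` and `I_v^m → I_v^n` are well defined and
surjective. -/
theorem stmt10 (ℓ : ℕ) [Fact ℓ.Prime] (m n : ℕ∞) (hn : 1 ≤ n) (hnm : n ≤ m)
    (K : Type*) [Field K] (hμ : MuIn K 1 ℓ m) (A : ValuationSubring K) :
    (∀ σ ∈ decomp ℓ m A, galProj m n σ ∈ decomp ℓ n A) ∧
    (∀ σ ∈ inertia ℓ m A, galProj m n σ ∈ inertia ℓ n A) ∧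
    (∀ τ ∈ decomp ℓ n A, ∃ σ ∈ decomp ℓ m A, galProj m n σ = τ) ∧
    (∀ τ ∈ inertia ℓ n A, ∃ σ ∈ inertia ℓ m A, galProj m n σ = τ) :=
  stmt10_general ℓ m n hnm K hμ A
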